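/- Assume σ_min(A) > 1 and let x* be the unique solution of Ax - |x| - b = 0. Let V(x) = (1/2)‖x - x*‖². Then along any solution x(t) of the system dx/dt = -γ ρ(x) Aᵀ r(x) with ρ(x) = ρ₁/‖r(x)‖^{1-λ₁} + ρ₂/‖r(x)‖^{1-λ₂} for r(x) ≠ 0, the derivative satisfies dV/dt ≤ -c₁ V^{κ₁} - c₂ V^{κ₂}, where c₁ = 2^{(λ₁-1)/2} γ ρ₁ μ² / (L₁+L₂)^{3-λ₁}, c₂ = 2^{(λ₂-1)/2} γ ρ₂ μ^{1+λ₂} / (L₁+L₂)^{1+λ₂}, κ₁ = (λ₁+1)/2 ∈ (1/2, 1), κ₂ = (λ₂+1)/2 > 1, μ = σ_min(A)² - 1, L₁ = ‖A+I‖, L₂ = ‖A-I‖. -/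

import Mathlib

open Matrix
open scoped BigOperators

/-- Euclidean norm of a vector in ℝⁿ. -/
noncomputable def evnorm {n : ℕ} (x : Fin n → ℝ) : ℝ := Real.sqrt (∑ i, x i ^ 2)

/-- Componentwise absolute value. -/
def vabs {n : ℕ} (x : Fin n → ℝ) : Fin n → ℝ := fun i => |x i|

/-- Spectral norm: sup of ‖Ax‖ over unit vectors x. -/
noncomputable def specNorm {n : ℕ} (A : Matrix (Fin n) (Fin n) ℝ) : ℝ :=
  sSup {c : ℝ | ∃ x : Fin n → ℝ, evnorm x = 1 ∧ c = evnorm (A *ᵥ x)}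

/-- Smallest singular value: inf of ‖Ax‖ over unit vectors x. -/
noncomputable def sigmaMin {n : ℕ} (A : Matrix (Fin n) (Fin n) ℝ) : ℝ :=
  sInf {c : ℝ | ∃ x : Fin n → ℝ, evnorm x = 1 ∧ c = evnorm (A *ᵥ x)}

open Classical in
/-- The regularization factor ρ(x). -/
noncomputable def rho {n : ℕ} (A : Matrix (Fin n) (Fin n) ℝ) (b : Fin n → ℝ)
    (ρ₁ ρ₂ lam₁ lam₂ : ℝ) (x : Fin n → ℝ) : ℝ :=
  if A *ᵥ x - vabs x - b = 0 then 0
  else ρ₁ / evnorm (A *ᵥ x - vabs x - b) ^ (1 - lam₁) +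
       ρ₂ / evnorm (A *ᵥ x - vabs x - b) ^ (1 - lam₂)

noncomputable def toE {n : ℕ} (x : Fin n → ℝ) : EuclideanSpace ℝ (Fin n) :=
  (WithLp.equiv 2 (Fin n → ℝ)).symm x

lemma evnorm_eq {n : ℕ} (x : Fin n → ℝ) : evnorm x = ‖toE x‖ := by
  simp [evnorm, toE, EuclideanSpace.norm_eq, Real.norm_eq_abs, sq_abs]

lemma dot_eq {n : ℕ} (x y : Fin n → ℝ) : x ⬝ᵥ y = inner ℝ (toE x) (toE y) := by
  simp [dotProduct, toE, PiLp.inner_apply, RCLike.inner_apply, mul_comm]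

lemma toE_sub {n : ℕ} (x y : Fin n → ℝ) : toE (x - y) = toE x - toE y := rfl
lemma toE_smul {n : ℕ} (c : ℝ) (x : Fin n → ℝ) : toE (c • x) = c • toE x := rfl

lemma evnorm_nonneg {n : ℕ} (x : Fin n → ℝ) : 0 ≤ evnorm x := Real.sqrt_nonneg _

lemma evnorm_zero {n : ℕ} : evnorm (0 : Fin n → ℝ) = 0 := by simp [evnorm]

lemma evnorm_pos {n : ℕ} {x : Fin n → ℝ} (hx : x ≠ 0) : 0 < evnorm x := by
  rw [evnorm_eq]
  rw [norm_pos_iff]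
  exact fun h => hx (by have := congrArg (WithLp.equiv 2 (Fin n → ℝ)) h; simpa [toE] using this)

lemma evnorm_smul {n : ℕ} (c : ℝ) (x : Fin n → ℝ) : evnorm (c • x) = |c| * evnorm x := by
  rw [evnorm_eq, evnorm_eq, toE_smul, norm_smul, Real.norm_eq_abs]

lemma sum_sq_eq_one {n : ℕ} {u : Fin n → ℝ} (hu : evnorm u = 1) : ∑ i, u i ^ 2 = 1 := by
  have h0 : (0:ℝ) ≤ ∑ i, u i ^ 2 := by positivity
  have := congrArg (· ^ 2) hu
  simpa [evnorm, Real.sq_sqrt h0] using this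

lemma exists_unit {n : ℕ} (hn : 0 < n) : ∃ u : Fin n → ℝ, evnorm u = 1 := by
  refine ⟨Pi.single ⟨0, hn⟩ 1, ?_⟩
  simp [evnorm, Pi.single_apply]

lemma mulVec_le_frob {n : ℕ} (M : Matrix (Fin n) (Fin n) ℝ) (u : Fin n → ℝ)
    (hu : evnorm u = 1) : evnorm (M *ᵥ u) ≤ Real.sqrt (∑ i, ∑ j, M i j ^ 2) := by
  apply Real.sqrt_le_sqrt
  apply Finset.sum_le_sum
  intro i _
  have h := Finset.sum_mul_sq_le_sq_mul_sq Finset.univ (fun j => M i j) u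
  simpa [Matrix.mulVec, dotProduct, sum_sq_eq_one hu] using h

lemma bddAbove_spec {n : ℕ} (M : Matrix (Fin n) (Fin n) ℝ) :
    BddAbove {c : ℝ | ∃ x : Fin n → ℝ, evnorm x = 1 ∧ c = evnorm (M *ᵥ x)} := by
  refine ⟨Real.sqrt (∑ i, ∑ j, M i j ^ 2), ?_⟩
  rintro c ⟨u, hu, rfl⟩
  exact mulVec_le_frob M u hu

lemma le_specNorm {n : ℕ} (M : Matrix (Fin n) (Fin n) ℝ) {u : Fin n → ℝ}
    (hu : evnorm u = 1) : evnorm (M *ᵥ u) ≤ specNorm M :=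
  le_csSup (bddAbove_spec M) ⟨u, hu, rfl⟩

lemma mulVec_le_specNorm {n : ℕ} (M : Matrix (Fin n) (Fin n) ℝ) (v : Fin n → ℝ) :
    evnorm (M *ᵥ v) ≤ specNorm M * evnorm v := by
  rcases eq_or_ne v 0 with rfl | hv
  · simp [Matrix.mulVec_zero, evnorm_zero]
  · have hc : 0 < evnorm v := evnorm_pos hv
    have hu : evnorm ((evnorm v)⁻¹ • v) = 1 := by
      rw [evnorm_smul, abs_of_pos (inv_pos.mpr hc), inv_mul_cancel₀ hc.ne']
    have h := le_specNorm M hu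
    rw [Matrix.mulVec_smul, evnorm_smul, abs_of_pos (inv_pos.mpr hc)] at h
    calc evnorm (M *ᵥ v) = evnorm v * ((evnorm v)⁻¹ * evnorm (M *ᵥ v)) := by
          field_simp
      _ ≤ evnorm v * specNorm M := by
          exact mul_le_mul_of_nonneg_left h hc.le
      _ = specNorm M * evnorm v := mul_comm _ _

lemma sigmaMin_le {n : ℕ} (M : Matrix (Fin n) (Fin n) ℝ) {u : Fin n → ℝ}
    (hu : evnorm u = 1) : sigmaMin M ≤ evnorm (M *ᵥ u) := by
  apply csInf_le
  · refine ⟨0, ?_⟩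
    rintro c ⟨w, hw, rfl⟩
    exact evnorm_nonneg _
  · exact ⟨u, hu, rfl⟩

lemma sigmaMin_mul_le {n : ℕ} (M : Matrix (Fin n) (Fin n) ℝ) (v : Fin n → ℝ) :
    sigmaMin M * evnorm v ≤ evnorm (M *ᵥ v) := by
  rcases eq_or_ne v 0 with rfl | hv
  · simp [Matrix.mulVec_zero, evnorm_zero]
  · have hc : 0 < evnorm v := evnorm_pos hv
    have hu : evnorm ((evnorm v)⁻¹ • v) = 1 := by
      rw [evnorm_smul, abs_of_pos (inv_pos.mpr hc), inv_mul_cancel₀ hc.ne']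
    have h := sigmaMin_le M hu
    rw [Matrix.mulVec_smul, evnorm_smul, abs_of_pos (inv_pos.mpr hc)] at h
    calc sigmaMin M * evnorm v = evnorm v * sigmaMin M := mul_comm _ _
      _ ≤ evnorm v * ((evnorm v)⁻¹ * evnorm (M *ᵥ v)) :=
          mul_le_mul_of_nonneg_left h hc.le
      _ = evnorm (M *ᵥ v) := by field_simp
lemma evnorm_add_le {n : ℕ} (x y : Fin n → ℝ) : evnorm (x + y) ≤ evnorm x + evnorm y := by
  rw [evnorm_eq, evnorm_eq, evnorm_eq]
  exact norm_add_le (toE x) (toE y)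

lemma evnorm_sub_le {n : ℕ} (x y : Fin n → ℝ) : evnorm (x - y) ≤ evnorm x + evnorm y := by
  rw [evnorm_eq, evnorm_eq, evnorm_eq]
  exact norm_sub_le (toE x) (toE y)
-- simplify (1/2*s^2)^((a+1)/2) = (1/2)^((a+1)/2) * s^(a+1)
lemma half_sq_rpow {s a : ℝ} (hs : 0 < s) :
    (1 / 2 * s ^ 2 : ℝ) ^ ((a + 1) / 2) = (1 / 2 : ℝ) ^ ((a + 1) / 2) * s ^ (a + 1) := by
  rw [Real.mul_rpow (by norm_num) (by positivity)]
  congr 1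
  rw [← Real.rpow_natCast s 2, ← Real.rpow_mul hs.le]
  congr 1
  push_cast
  ring

lemma two_pow_combine (a : ℝ) :
    (2 : ℝ) ^ ((a - 1) / 2) * (1 / 2 : ℝ) ^ ((a + 1) / 2) = 1 / 2 := by
  rw [one_div, Real.inv_rpow (by norm_num : (0:ℝ) ≤ 2), ← Real.rpow_neg (by norm_num : (0:ℝ) ≤ 2),
    ← Real.rpow_add (by norm_num : (0:ℝ) < 2)]
  have : (a - 1) / 2 + -((a + 1) / 2) = -1 := by ring
  rw [this, Real.rpow_neg_one]

lemma key_ineq (γ ρ₁ ρ₂ lam₁ lam₂ μ S s R D : ℝ)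
    (hγ : 0 < γ) (hρ₁ : 0 < ρ₁) (hρ₂ : 0 < ρ₂)
    (hl1 : 0 < lam₁) (hl1' : lam₁ < 1) (hl2 : 1 < lam₂)
    (hμ : 0 < μ) (hS : 0 < S) (hμS : μ ≤ S ^ 2)
    (hs : 0 < s) (hR : 0 < R)
    (hD : μ / 2 * s ^ 2 ≤ D)
    (h2 : R ≤ S * s) (h3 : μ * s ≤ S * R) :
    (-(γ * (ρ₁ / R ^ (1 - lam₁) + ρ₂ / R ^ (1 - lam₂)) * D) : ℝ) ≤
      -((2:ℝ) ^ ((lam₁ - 1) / 2) * γ * ρ₁ * μ ^ (2:ℕ) / S ^ (3 - lam₁)) *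
          ((1 / 2 * s ^ 2) ^ ((lam₁ + 1) / 2))
        - ((2:ℝ) ^ ((lam₂ - 1) / 2) * γ * ρ₂ * μ ^ (1 + lam₂) / S ^ (1 + lam₂)) *
          ((1 / 2 * s ^ 2) ^ ((lam₂ + 1) / 2)) := by
  have hRp1 : (0:ℝ) < R ^ (1 - lam₁) := Real.rpow_pos_of_pos hR _
  have hRp2 : (0:ℝ) < R ^ (1 - lam₂) := Real.rpow_pos_of_pos hR _
  have hSp : ∀ t : ℝ, (0:ℝ) < S ^ t := fun t => Real.rpow_pos_of_pos hS t
  -- First term inequality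
  have L1 : (2:ℝ) ^ ((lam₁ - 1) / 2) * γ * ρ₁ * μ ^ (2:ℕ) / S ^ (3 - lam₁) *
      ((1 / 2 * s ^ 2) ^ ((lam₁ + 1) / 2)) ≤ γ * (ρ₁ / R ^ (1 - lam₁)) * (μ / 2 * s ^ 2) := by
    rw [half_sq_rpow hs]
    have key : μ ^ (2:ℕ) * s ^ (lam₁ + 1) * R ^ (1 - lam₁) ≤ μ * s ^ 2 * S ^ (3 - lam₁) := by
      have hr : R ^ (1 - lam₁) ≤ S ^ (1 - lam₁) * s ^ (1 - lam₁) := by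
        rw [← Real.mul_rpow hS.le hs.le]
        exact Real.rpow_le_rpow hR.le h2 (by linarith)
      have hss : s ^ (lam₁ + 1) * s ^ (1 - lam₁) = s ^ 2 := by
        rw [← Real.rpow_add hs, ← Real.rpow_natCast s 2]
        congr 1
        push_cast
        ring
      have hSS : S ^ (2:ℕ) * S ^ (1 - lam₁) = S ^ (3 - lam₁) := by
        rw [← Real.rpow_natCast S 2, ← Real.rpow_add hS]
        congr 1
        push_cast
        ring
      calc μ ^ (2:ℕ) * s ^ (lam₁ + 1) * R ^ (1 - lam₁)
          ≤ μ ^ (2:ℕ) * s ^ (lam₁ + 1) * (S ^ (1 - lam₁) * s ^ (1 - lam₁)) := by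
            apply mul_le_mul_of_nonneg_left hr (by positivity)
        _ = μ ^ (2:ℕ) * s ^ 2 * S ^ (1 - lam₁) := by
            rw [← hss]; ring
        _ ≤ (μ * S ^ (2:ℕ)) * s ^ 2 * S ^ (1 - lam₁) := by
            have : μ ^ (2:ℕ) ≤ μ * S ^ (2:ℕ) := by
              have := mul_le_mul_of_nonneg_left hμS hμ.le
              simpa [pow_two] using this
            apply mul_le_mul_of_nonneg_right (mul_le_mul_of_nonneg_right this (by positivity)) (by positivity)
        _ = μ * s ^ 2 * (S ^ (2:ℕ) * S ^ (1 - lam₁)) := by ring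
        _ = μ * s ^ 2 * S ^ (3 - lam₁) := by rw [hSS]
    calc (2:ℝ) ^ ((lam₁ - 1) / 2) * γ * ρ₁ * μ ^ (2:ℕ) / S ^ (3 - lam₁) *
          ((1 / 2 : ℝ) ^ ((lam₁ + 1) / 2) * s ^ (lam₁ + 1))
        = γ * ρ₁ * (μ ^ (2:ℕ) * s ^ (lam₁ + 1)) / S ^ (3 - lam₁) *
          ((2:ℝ) ^ ((lam₁ - 1) / 2) * (1 / 2 : ℝ) ^ ((lam₁ + 1) / 2)) := by
          field_simp
      _ = γ * ρ₁ * (μ ^ (2:ℕ) * s ^ (lam₁ + 1)) / S ^ (3 - lam₁) * (1/2) := by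
          rw [two_pow_combine]
      _ ≤ γ * ρ₁ * (μ * s ^ 2 * S ^ (3 - lam₁) / R ^ (1 - lam₁)) / S ^ (3 - lam₁) * (1/2) := by
          gcongr
          rw [le_div_iff₀ hRp1]
          exact key
      _ = γ * (ρ₁ / R ^ (1 - lam₁)) * (μ / 2 * s ^ 2) := by
          field_simp
  -- Second term inequality
  have L2 : (2:ℝ) ^ ((lam₂ - 1) / 2) * γ * ρ₂ * μ ^ (1 + lam₂) / S ^ (1 + lam₂) *
      ((1 / 2 * s ^ 2) ^ ((lam₂ + 1) / 2)) ≤ γ * (ρ₂ / R ^ (1 - lam₂)) * (μ / 2 * s ^ 2) := by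
    rw [half_sq_rpow hs]
    have hRinv : ρ₂ / R ^ (1 - lam₂) = ρ₂ * R ^ (lam₂ - 1) := by
      rw [show (1 - lam₂ : ℝ) = -(lam₂ - 1) by ring, Real.rpow_neg hR.le]
      field_simp
    have key2 : μ ^ (1 + lam₂) * s ^ (lam₂ + 1) ≤ μ * s ^ 2 * R ^ (lam₂ - 1) * S ^ (1 + lam₂) := by
      have hb : 0 ≤ lam₂ - 1 := by linarith
      have hr2 : (μ * s / S) ^ (lam₂ - 1) ≤ R ^ (lam₂ - 1) := by
        apply Real.rpow_le_rpow (by positivity) _ hb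
        rw [div_le_iff₀ hS, mul_comm R S]
        exact h3
      have hdiv : (μ * s / S) ^ (lam₂ - 1) = μ ^ (lam₂ - 1) * s ^ (lam₂ - 1) / S ^ (lam₂ - 1) := by
        rw [Real.div_rpow (by positivity) hS.le, Real.mul_rpow hμ.le hs.le]
      have e1 : μ ^ (1 + lam₂) = μ ^ (lam₂ - 1) * μ ^ (2:ℕ) := by
        rw [← Real.rpow_natCast μ 2, ← Real.rpow_add hμ]
        congr 1
        push_cast
        ring
      have e2 : s ^ (lam₂ + 1) = s ^ (lam₂ - 1) * s ^ (2:ℕ) := by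
        rw [← Real.rpow_natCast s 2, ← Real.rpow_add hs]
        congr 1
        push_cast
        ring
      have e3 : S ^ (lam₂ - 1) * S ^ (2:ℕ) = S ^ (1 + lam₂) := by
        rw [← Real.rpow_natCast S 2, ← Real.rpow_add hS]
        congr 1
        push_cast
        ring
      calc μ ^ (1 + lam₂) * s ^ (lam₂ + 1)
          = (μ ^ (lam₂ - 1) * s ^ (lam₂ - 1) / S ^ (lam₂ - 1)) * S ^ (lam₂ - 1) *
              (μ ^ (2:ℕ) * s ^ (2:ℕ)) := by
            rw [e1, e2]
            field_simp
        _ ≤ R ^ (lam₂ - 1) * S ^ (lam₂ - 1) * (μ ^ (2:ℕ) * s ^ (2:ℕ)) := by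
            rw [← hdiv]
            gcongr
        _ ≤ R ^ (lam₂ - 1) * S ^ (lam₂ - 1) * ((μ * S ^ (2:ℕ)) * s ^ (2:ℕ)) := by
            have hmu2 : μ ^ (2:ℕ) ≤ μ * S ^ (2:ℕ) := by
              calc μ ^ (2:ℕ) = μ * μ := sq μ
                _ ≤ μ * S ^ 2 := mul_le_mul_of_nonneg_left hμS hμ.le
            gcongr
        _ = μ * s ^ 2 * R ^ (lam₂ - 1) * (S ^ (lam₂ - 1) * S ^ (2:ℕ)) := by ring
        _ = μ * s ^ 2 * R ^ (lam₂ - 1) * S ^ (1 + lam₂) := by rw [e3]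
    calc (2:ℝ) ^ ((lam₂ - 1) / 2) * γ * ρ₂ * μ ^ (1 + lam₂) / S ^ (1 + lam₂) *
          ((1 / 2 : ℝ) ^ ((lam₂ + 1) / 2) * s ^ (lam₂ + 1))
        = γ * ρ₂ * (μ ^ (1 + lam₂) * s ^ (lam₂ + 1)) / S ^ (1 + lam₂) *
          ((2:ℝ) ^ ((lam₂ - 1) / 2) * (1 / 2 : ℝ) ^ ((lam₂ + 1) / 2)) := by
          field_simp
      _ = γ * ρ₂ * (μ ^ (1 + lam₂) * s ^ (lam₂ + 1)) / S ^ (1 + lam₂) * (1/2) := by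
          rw [two_pow_combine]
      _ ≤ γ * ρ₂ * (μ * s ^ 2 * R ^ (lam₂ - 1) * S ^ (1 + lam₂)) / S ^ (1 + lam₂) * (1/2) := by
          gcongr
      _ = γ * (ρ₂ / R ^ (1 - lam₂)) * (μ / 2 * s ^ 2) := by
          rw [hRinv]
          field_simp
  -- combine
  have hD1 : γ * (ρ₁ / R ^ (1 - lam₁)) * (μ / 2 * s ^ 2) ≤ γ * (ρ₁ / R ^ (1 - lam₁)) * D :=
    mul_le_mul_of_nonneg_left hD (by positivity)
  have hD2 : γ * (ρ₂ / R ^ (1 - lam₂)) * (μ / 2 * s ^ 2) ≤ γ * (ρ₂ / R ^ (1 - lam₂)) * D :=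
    mul_le_mul_of_nonneg_left hD (by positivity)
  nlinarith [L1, L2, hD1, hD2]

set_option maxHeartbeats 2000000 in
theorem stmt9 {n : ℕ} (A : Matrix (Fin n) (Fin n) ℝ) (b : Fin n → ℝ)
    (hA : 1 < sigmaMin A)
    (γ ρ₁ ρ₂ lam₁ lam₂ : ℝ) (hγ : 0 < γ) (hρ₁ : 0 < ρ₁) (hρ₂ : 0 < ρ₂)
    (hlam₁ : lam₁ ∈ Set.Ioo (0 : ℝ) 1) (hlam₂ : 1 < lam₂)
    (xs : Fin n → ℝ) (hxs : A *ᵥ xs - vabs xs - b = 0) :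
    ∀ x : Fin n → ℝ, x ≠ xs →
      (x - xs) ⬝ᵥ (-((γ * rho A b ρ₁ ρ₂ lam₁ lam₂ x) • (Aᵀ *ᵥ (A *ᵥ x - vabs x - b)))) ≤
        -((2 : ℝ) ^ ((lam₁ - 1) / 2) * γ * ρ₁ * (sigmaMin A ^ 2 - 1) ^ (2 : ℕ) /
            (specNorm (A + 1) + specNorm (A - 1)) ^ (3 - lam₁)) *
          ((1 / 2 * evnorm (x - xs) ^ 2) ^ ((lam₁ + 1) / 2))
        - ((2 : ℝ) ^ ((lam₂ - 1) / 2) * γ * ρ₂ * (sigmaMin A ^ 2 - 1) ^ (1 + lam₂) /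
            (specNorm (A + 1) + specNorm (A - 1)) ^ (1 + lam₂)) *
          ((1 / 2 * evnorm (x - xs) ^ 2) ^ ((lam₂ + 1) / 2)) := by
  intro x hx
  have hn : 0 < n := by
    rcases Nat.eq_zero_or_pos n with h0 | h
    · subst h0
      exact absurd (funext fun i => i.elim0) hx
    · exact h
  obtain ⟨u0, hu0⟩ := exists_unit hn
  set e : Fin n → ℝ := x - xs with he
  set r : Fin n → ℝ := A *ᵥ x - vabs x - b with hr
  set d : Fin n → ℝ := vabs x - vabs xs with hd'
  have hre : r = A *ᵥ e - d := by
    calc r = (A *ᵥ x - vabs x - b) - (A *ᵥ xs - vabs xs - b) := by rw [hxs, sub_zero]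
      _ = A *ᵥ e - d := by rw [he, Matrix.mulVec_sub, hd']; abel
  set s : ℝ := evnorm e with hsdef
  have hs : 0 < s := evnorm_pos (sub_ne_zero.mpr hx)
  set σ : ℝ := sigmaMin A with hσdef
  set μ : ℝ := σ ^ 2 - 1 with hμdef
  have hμ : 0 < μ := by
    have : 1 < σ ^ 2 := by nlinarith
    simp only [hμdef]; linarith
  set S : ℝ := specNorm (A + 1) + specNorm (A - 1) with hSdef
  -- bound by spectral norms
  have hSmaj : ∀ v : Fin n → ℝ, evnorm (A *ᵥ v) ≤ S / 2 * evnorm v := by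
    intro v
    have hv : A *ᵥ v = (1 / 2 : ℝ) • ((A + 1) *ᵥ v + (A - 1) *ᵥ v) := by
      rw [Matrix.add_mulVec, Matrix.sub_mulVec, Matrix.one_mulVec]
      funext i
      simp only [Pi.smul_apply, Pi.add_apply, Pi.sub_apply, smul_eq_mul]
      ring
    rw [hv, evnorm_smul]
    have h1 := evnorm_add_le ((A + 1) *ᵥ v) ((A - 1) *ᵥ v)
    have h2 := mulVec_le_specNorm (A + 1) v
    have h3 := mulVec_le_specNorm (A - 1) v
    rw [abs_of_pos (by norm_num : (0:ℝ) < 1/2)]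
    calc (1/2 : ℝ) * evnorm ((A + 1) *ᵥ v + (A - 1) *ᵥ v)
        ≤ (1/2 : ℝ) * (specNorm (A + 1) * evnorm v + specNorm (A - 1) * evnorm v) := by
          apply mul_le_mul_of_nonneg_left _ (by norm_num)
          exact h1.trans (add_le_add h2 h3)
      _ = S / 2 * evnorm v := by rw [hSdef]; ring
  have hS2 : 2 ≤ S := by
    have hv : u0 = (1 / 2 : ℝ) • ((A + 1) *ᵥ u0 - (A - 1) *ᵥ u0) := by
      rw [Matrix.add_mulVec, Matrix.sub_mulVec, Matrix.one_mulVec]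
      funext i
      simp only [Pi.smul_apply, Pi.add_apply, Pi.sub_apply, smul_eq_mul]
      ring
    have h1 : evnorm u0 ≤ (1/2 : ℝ) * (specNorm (A + 1) + specNorm (A - 1)) := by
      conv_lhs => rw [hv]
      rw [evnorm_smul, abs_of_pos (by norm_num : (0:ℝ) < 1/2)]
      apply mul_le_mul_of_nonneg_left _ (by norm_num)
      calc evnorm ((A + 1) *ᵥ u0 - (A - 1) *ᵥ u0)
          ≤ evnorm ((A + 1) *ᵥ u0) + evnorm ((A - 1) *ᵥ u0) := evnorm_sub_le _ _
        _ ≤ specNorm (A + 1) + specNorm (A - 1) :=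
            add_le_add (le_specNorm _ hu0) (le_specNorm _ hu0)
    rw [hu0] at h1
    rw [hSdef]
    linarith
  have hS : 0 < S := by linarith
  have hσS : σ ≤ S / 2 := by
    have h1 := sigmaMin_le A hu0
    have h2 := (mulVec_le_specNorm A u0).trans_eq (by rw [hu0, mul_one])
    have h3 := hSmaj u0
    rw [hu0, mul_one] at h3
    exact h1.trans h3
  have hμS : μ ≤ S ^ 2 := by
    have hσ0 : 0 < σ := by linarith
    nlinarith
  -- ‖d‖ ≤ s
  have hdle : evnorm d ≤ s := by
    rw [hsdef]
    apply Real.sqrt_le_sqrt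
    apply Finset.sum_le_sum
    intro i _
    have h := abs_abs_sub_abs_le_abs_sub (x i) (xs i)
    have h2 : (|x i| - |xs i|) ^ 2 ≤ (x i - xs i) ^ 2 := by
      rw [← sq_abs (|x i| - |xs i|), ← sq_abs (x i - xs i)]
      exact pow_le_pow_left₀ (abs_nonneg _) h 2
    simpa [hd', he, vabs] using h2
  have hAe : σ * s ≤ evnorm (A *ᵥ e) := sigmaMin_mul_le A e
  -- main inner product bound
  have hdot : μ / 2 * s ^ 2 ≤ (A *ᵥ e) ⬝ᵥ r := by
    rw [dot_eq]
    have hw : toE r = toE (A *ᵥ e) - toE d := by rw [hre]; rfl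
    have hpol := norm_sub_sq_real (toE (A *ᵥ e)) (toE r)
    have hsub : toE (A *ᵥ e) - toE r = toE d := by rw [hw]; abel
    rw [hsub] at hpol
    have h1 : σ * s ≤ ‖toE (A *ᵥ e)‖ := by rw [← evnorm_eq]; exact hAe
    have h2 : ‖toE d‖ ≤ s := by rw [← evnorm_eq]; exact hdle
    have h3 : (0:ℝ) ≤ ‖toE r‖ := norm_nonneg _
    have h4 : (0:ℝ) ≤ ‖toE d‖ := norm_nonneg _
    have h5 : 0 ≤ σ * s := mul_nonneg (by linarith) hs.le
    nlinarith [sq_nonneg (‖toE r‖)]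
  have hr0 : r ≠ 0 := by
    intro h0
    rw [h0] at hdot
    simp only [dotProduct_zero] at hdot
    nlinarith [mul_pos hμ (pow_pos hs 2)]
  set R : ℝ := evnorm r with hRdef
  have hR : 0 < R := evnorm_pos hr0
  clear_value e r d s σ μ S R
  have h2 : R ≤ S * s := by
    have := evnorm_sub_le (A *ᵥ e) d
    rw [← hre] at this
    have hA2 := hSmaj e
    rw [hRdef]
    nlinarith
  have h3 : μ * s ≤ S * R := by
    have hCS : (A *ᵥ e) ⬝ᵥ r ≤ evnorm (A *ᵥ e) * evnorm r := by
      rw [dot_eq, evnorm_eq, evnorm_eq]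
      exact real_inner_le_norm _ _
    rw [← hRdef] at hCS
    have hA2 := hSmaj e
    rw [← hsdef] at hA2
    have hb1 : evnorm (A *ᵥ e) * R ≤ S / 2 * s * R :=
      mul_le_mul_of_nonneg_right hA2 hR.le
    have key : μ * s * s ≤ S * R * s := by nlinarith [hdot, hCS, hb1, sq_nonneg s]
    exact le_of_mul_le_mul_right key hs
  -- rewrite LHS
  have hdotid : e ⬝ᵥ (Aᵀ *ᵥ r) = (A *ᵥ e) ⬝ᵥ r := by
    rw [Matrix.dotProduct_mulVec, Matrix.vecMul_transpose]
  have hrho : rho A b ρ₁ ρ₂ lam₁ lam₂ x = ρ₁ / R ^ (1 - lam₁) + ρ₂ / R ^ (1 - lam₂) := by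
    have hcond : ¬(A *ᵥ x - vabs x - b = 0) := by rw [← hr]; exact hr0
    simp only [rho, if_neg hcond]
    rw [← hr, hRdef]
  have hLHS : e ⬝ᵥ (-((γ * rho A b ρ₁ ρ₂ lam₁ lam₂ x) • (Aᵀ *ᵥ r))) =
      -(γ * (ρ₁ / R ^ (1 - lam₁) + ρ₂ / R ^ (1 - lam₂)) * ((A *ᵥ e) ⬝ᵥ r)) := by
    rw [dotProduct_neg, dotProduct_smul, smul_eq_mul, hdotid, hrho]
  rw [hLHS]
  exact key_ineq γ ρ₁ ρ₂ lam₁ lam₂ μ S s R ((A *ᵥ e) ⬝ᵥ r) hγ hρ₁ hρ₂ hlam₁.1 hlam₁.2 hlam₂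
    hμ hS hμS hs hR hdot h2 h3
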